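/- With G ≺ H, 𝒜, ℬ as in the combinatorial set-up, suppose every minimal left ideal of S(ℬ) is a group. Then every minimal left ideal of S(𝒜) is a group. -/

import Mathlib

open Set

/-- Left translate of a set: $hA = \{h·a : a ∈ A\}$. -/
def trL {H : Type*} [Group H] (h : H) (A : Set H) : Set H := (fun x => h * x) '' A

/-- A Boolean algebra of subsets of $T ⊆ H$ closed under left translation by elements
of $T$ (complements are taken relative to $T$). -/
def IsAlgOn {H : Type*} [Group H] (T : Set H) (𝒜 : Set (Set H)) : Prop :=
  (∀ A ∈ 𝒜, A ⊆ T) ∧ ∅ ∈ 𝒜 ∧ T ∈ 𝒜 ∧ (∀ A ∈ 𝒜, T \ A ∈ 𝒜) ∧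
    (∀ A ∈ 𝒜, ∀ B ∈ 𝒜, A ∪ B ∈ 𝒜) ∧ ∀ g ∈ T, ∀ A ∈ 𝒜, trL g A ∈ 𝒜

/-- An ultrafilter on the algebra 𝒜 of subsets of $T$. -/
def IsUltraOn {H : Type*} [Group H] (T : Set H) (𝒜 p : Set (Set H)) : Prop :=
  p ⊆ 𝒜 ∧ ∅ ∉ p ∧ T ∈ p ∧ (∀ A ∈ p, ∀ B ∈ p, A ∩ B ∈ p) ∧
    (∀ A ∈ p, ∀ B ∈ 𝒜, A ⊆ B → B ∈ p) ∧ ∀ A ∈ 𝒜, A ∈ p ∨ T \ A ∈ p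

/-- The map $d_p(A) = \{g ∈ T : g⁻¹A ∈ p\}$. -/
def dmap {H : Type*} [Group H] (T : Set H) (p : Set (Set H)) (A : Set H) : Set H :=
  {g : H | g ∈ T ∧ trL g⁻¹ A ∈ p}

/-- 𝒜 is d-closed. -/
def DClosedOn {H : Type*} [Group H] (T : Set H) (𝒜 : Set (Set H)) : Prop :=
  ∀ p : Set (Set H), IsUltraOn T 𝒜 p → ∀ A ∈ 𝒜, dmap T p A ∈ 𝒜

/-- The semigroup operation on ultrafilters: $A ∈ p*q$ iff $A ∈ 𝒜$ and $d_q(A) ∈ p$. -/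
def ustar {H : Type*} [Group H] (T : Set H) (𝒜 p q : Set (Set H)) : Set (Set H) :=
  {A | A ∈ 𝒜 ∧ dmap T q A ∈ p}

/-- The combinatorial set-up: $G ≺ H$ groups, 𝒜 a d-closed $G$-algebra of subsets of
$G$, ℬ a d-closed $H$-algebra of subsets of $H$, and a Boolean monomorphism
$A ↦ A^\#$ from 𝒜 to ℬ respecting left translation by elements of $G$, with
$A^\# ∩ G = A$ and $ℬ|_G = 𝒜$.  The field `elem` records the combinatorial content
of the elementarity $G ≺ H$: a set of 𝒜 whose $\#$-extension is nonempty is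
itself nonempty. -/
structure CombSetup (H : Type*) [Group H] where
  G : Subgroup H
  𝒜 : Set (Set H)
  ℬ : Set (Set H)
  sharp : Set H → Set H
  alg𝒜 : IsAlgOn (G : Set H) 𝒜
  algℬ : IsAlgOn (univ : Set H) ℬ
  dclosed𝒜 : DClosedOn (G : Set H) 𝒜
  dclosedℬ : DClosedOn (univ : Set H) ℬ
  sharp_mem : ∀ A ∈ 𝒜, sharp A ∈ ℬ
  sharp_inter : ∀ A ∈ 𝒜, sharp A ∩ (G : Set H) = A
  sharp_empty : sharp ∅ = ∅
  sharp_union : ∀ A ∈ 𝒜, ∀ B ∈ 𝒜, sharp (A ∪ B) = sharp A ∪ sharp B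
  sharp_compl : ∀ A ∈ 𝒜, sharp ((G : Set H) \ A) = (sharp A)ᶜ
  sharp_trans : ∀ g ∈ G, ∀ A ∈ 𝒜, sharp (trL g A) = trL g (sharp A)
  restrict_mem : ∀ B ∈ ℬ, B ∩ (G : Set H) ∈ 𝒜
  elem : ∀ A ∈ 𝒜, (sharp A).Nonempty → A.Nonempty

variable {H : Type*} [Group H]

/-- The restriction map $r : S(ℬ) → S(𝒜)$, $r(q) = \{A ∈ 𝒜 : A^\# ∈ q\}$. -/
def CombSetup.res (C : CombSetup H) (q : Set (Set H)) : Set (Set H) :=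
  {A | A ∈ C.𝒜 ∧ C.sharp A ∈ q}

/-- $q ∈ S(ℬ)$ is a weak heir of $p ∈ S(𝒜)$: $d_q(A^\#) = (d_p A)^\#$ for all $A ∈ 𝒜$. -/
def CombSetup.IsWeakHeir (C : CombSetup H) (q p : Set (Set H)) : Prop :=
  IsUltraOn (univ : Set H) C.ℬ q ∧ IsUltraOn (C.G : Set H) C.𝒜 p ∧
    ∀ A ∈ C.𝒜, dmap (univ : Set H) q (C.sharp A) = C.sharp (dmap (C.G : Set H) p A)

/-- $q ∈ S(ℬ)$ is a weak coheir of $p ∈ S(𝒜)$: for every $A ∈ 𝒜$ and $s ∈ S(ℬ)$,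
$d_s(A^\#) ∈ q ↔ d_s(A^\#) ∩ G ∈ p$. -/
def CombSetup.IsWeakCoheir (C : CombSetup H) (q p : Set (Set H)) : Prop :=
  IsUltraOn (univ : Set H) C.ℬ q ∧ IsUltraOn (C.G : Set H) C.𝒜 p ∧
    ∀ A ∈ C.𝒜, ∀ s : Set (Set H), IsUltraOn (univ : Set H) C.ℬ s →
      (dmap (univ : Set H) s (C.sharp A) ∈ q ↔
        dmap (univ : Set H) s (C.sharp A) ∩ (C.G : Set H) ∈ p)

/-- The coheir extension $p^ℬ = \{B ∈ ℬ : B ∩ G ∈ p\}$. -/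
def CombSetup.coheirExt (C : CombSetup H) (p : Set (Set H)) : Set (Set H) :=
  {B | B ∈ C.ℬ ∧ B ∩ (C.G : Set H) ∈ p}

/-- $q ∈ S(ℬ)$ is a coheir over 𝒜: every set in $q$ meets $G$. -/
def CombSetup.IsCoheir (C : CombSetup H) (q : Set (Set H)) : Prop :=
  IsUltraOn (univ : Set H) C.ℬ q ∧ ∀ B ∈ q, (B ∩ (C.G : Set H)).Nonempty

/-- A left ideal of the semigroup of ultrafilters on the algebra 𝒜 of subsets of $T$:
a nonempty set of ultrafilters closed under $p * (-)$ for all ultrafilters $p$. -/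
def IsLeftIdealU {H : Type*} [Group H] (T : Set H) (𝒜 : Set (Set H))
    (I : Set (Set (Set H))) : Prop :=
  I.Nonempty ∧ (∀ q ∈ I, IsUltraOn T 𝒜 q) ∧
    ∀ p : Set (Set H), IsUltraOn T 𝒜 p → ∀ q ∈ I, ustar T 𝒜 p q ∈ I

/-- A minimal left ideal of the semigroup of ultrafilters. -/
def IsMinLeftIdealU {H : Type*} [Group H] (T : Set H) (𝒜 : Set (Set H))
    (I : Set (Set (Set H))) : Prop :=
  IsLeftIdealU T 𝒜 I ∧ ∀ J ⊆ I, IsLeftIdealU T 𝒜 J → J = I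

/-- A set of ultrafilters that is a group under $*$. -/
def IsGroupU {H : Type*} [Group H] (T : Set H) (𝒜 : Set (Set H))
    (I : Set (Set (Set H))) : Prop :=
  (∀ p ∈ I, ∀ q ∈ I, ustar T 𝒜 p q ∈ I) ∧
    ∃ u ∈ I, (∀ p ∈ I, ustar T 𝒜 u p = p ∧ ustar T 𝒜 p u = p) ∧
      ∀ p ∈ I, ∃ q ∈ I, ustar T 𝒜 p q = u ∧ ustar T 𝒜 q p = u

/-!
$S(𝒜)$ and $S(ℬ)$ are compact Hausdorff semigroups with continuous right multiplication, so
they have minimal left ideals and every minimal left ideal contains an idempotent. Let $M$ be a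
minimal left ideal of $S(ℬ)$; by hypothesis it is a group, with identity $w$. For an idempotent
$e ∈ S(𝒜)$ the coheir extension $ẽ$ is idempotent, and $ẽ * w$ is an idempotent of the group $M$,
so $ẽ * w = w$ and $ẽ$ fixes $M$ pointwise. Since $r(ẽ * m) = e * r(m)$, every idempotent of
$S(𝒜)$ fixes the left ideal $r(M)$ pointwise. If $v, v'$ are idempotents in a minimal left ideal
$I$ of $S(𝒜)$, then $I = r(M) * v$, so $v' = y * v$ with $y ∈ r(M)$ and $v * v' = v'$; but
idempotents of $I$ are right identities on $I$, so $v * v' = v$. Hence $I$ has a unique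
idempotent, which makes it a group.
-/

section LeftIdeal

variable {M : Type*} [Semigroup M]

def IsLeftIdeal (L : Set M) : Prop :=
  L.Nonempty ∧ ∀ p, ∀ q ∈ L, p * q ∈ L

def IsGroupIn (L : Set M) : Prop :=
  (∀ p ∈ L, ∀ q ∈ L, p * q ∈ L) ∧
    ∃ u ∈ L, (∀ p ∈ L, u * p = p ∧ p * u = p) ∧ ∀ p ∈ L, ∃ q ∈ L, p * q = u ∧ q * p = u

lemma IsLeftIdeal.image_mul_right {L : Set M} (hL : IsLeftIdeal L) (x : M) :
    IsLeftIdeal ((· * x) '' L) := by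
  obtain ⟨y, hy⟩ := hL.1
  refine ⟨⟨y * x, y, hy, rfl⟩, ?_⟩
  rintro p _ ⟨s, hs, rfl⟩
  exact ⟨p * s, hL.2 p s hs, mul_assoc p s x⟩

lemma isLeftIdeal_univ (x : M) : IsLeftIdeal (univ : Set M) :=
  ⟨⟨x, trivial⟩, fun _ _ _ ↦ trivial⟩

lemma isLeftIdeal_range_mul_right (x : M) : IsLeftIdeal (range (· * x)) := by
  simpa only [image_univ] using (isLeftIdeal_univ x).image_mul_right x

lemma Minimal.image_mul_right_eq {L I : Set M} (hI : Minimal IsLeftIdeal I) (hL : IsLeftIdeal L)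
    {x : M} (hx : x ∈ I) : (· * x) '' L = I :=
  hI.eq_of_subset (hL.image_mul_right x) (by rintro _ ⟨s, -, rfl⟩; exact hI.prop.2 s x hx)

lemma Minimal.range_mul_right_eq {I : Set M} (hI : Minimal IsLeftIdeal I) {x : M} (hx : x ∈ I) :
    range (· * x) = I := by
  simpa only [image_univ] using hI.image_mul_right_eq (isLeftIdeal_univ x) hx

lemma Minimal.mul_idempotent_eq {I : Set M} (hI : Minimal IsLeftIdeal I) {e p : M} (he : e ∈ I)
    (hee : IsIdempotentElem e) (hp : p ∈ I) : p * e = p := by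
  obtain ⟨s, rfl⟩ := (hI.range_mul_right_eq he).symm ▸ hp
  exact hee.mul_mul_self s

lemma IsGroupIn.idempotent_mul_eq {L : Set M} (hL : IsLeftIdeal L) (hG : IsGroupIn L) {f : M}
    (hf : IsIdempotentElem f) {m : M} (hm : m ∈ L) : f * m = m := by
  obtain ⟨-, u, hu, hid, hinv⟩ := hG
  have huniq : ∀ v ∈ L, IsIdempotentElem v → v = u := by
    intro v hv hvv
    obtain ⟨z, -, hvz, -⟩ := hinv v hv
    calc v = v * u := ((hid v hv).2).symm
      _ = u := by rw [← hvz, ← mul_assoc, hvv.eq]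
  -- `f * u` is an idempotent of the group `L`
  have hfu : f * u = u := by
    refine huniq _ (hL.2 f u hu) ?_
    rw [IsIdempotentElem, mul_assoc, (hid _ (hL.2 f u hu)).1, ← mul_assoc, hf.eq]
  rw [← (hid m hm).1, ← mul_assoc, hfu]

lemma Minimal.idempotent_unique {L I : Set M} (hL : IsLeftIdeal L)
    (hfix : ∀ e : M, IsIdempotentElem e → ∀ y ∈ L, e * y = y) (hI : Minimal IsLeftIdeal I)
    {v v' : M} (hv : v ∈ I) (hvv : IsIdempotentElem v) (hv' : v' ∈ I)
    (hvv' : IsIdempotentElem v') : v = v' := by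
  obtain ⟨y, hy, rfl⟩ := (hI.image_mul_right_eq hL hv).symm ▸ hv'
  calc v = v * (y * v) := (hI.mul_idempotent_eq hv' hvv' hv).symm
    _ = y * v := by rw [← mul_assoc, hfix v hvv y hy]

lemma Minimal.isGroupIn_of_idempotent_unique {I : Set M} (hI : Minimal IsLeftIdeal I) {u : M}
    (hu : u ∈ I) (huu : IsIdempotentElem u) (huniq : ∀ v ∈ I, IsIdempotentElem v → v = u) :
    IsGroupIn I := by
  have hright : ∀ p ∈ I, p * u = p := fun p hp ↦ hI.mul_idempotent_eq hu huu hp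
  have hinv : ∀ p ∈ I, ∃ q ∈ I, p * q = u ∧ q * p = u := by
    intro p hp
    obtain ⟨q, hq, hqp : q * p = u⟩ := (hI.image_mul_right_eq hI.prop hp).symm ▸ hu
    refine ⟨q, hq, huniq _ (hI.prop.2 p q hq) ?_, hqp⟩
    rw [IsIdempotentElem, ← mul_assoc, mul_assoc p q p, hqp, hright p hp]
  refine ⟨fun p _ q hq ↦ hI.prop.2 p q hq, u, hu, fun p hp ↦ ⟨?_, hright p hp⟩, hinv⟩
  obtain ⟨q, -, hpq, hqp⟩ := hinv p hp
  rw [← hpq, mul_assoc, hqp, hright p hp]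

variable [TopologicalSpace M] [CompactSpace M] [T2Space M]

/-- Zorn's lemma gives a minimal closed left ideal; it is minimal among all left ideals because
every `range (· * y)` is a closed left ideal. -/
lemma exists_minimal_isLeftIdeal [Nonempty M] (hc : ∀ r : M, Continuous (· * r)) :
    ∃ I : Set M, Minimal IsLeftIdeal I := by
  obtain ⟨x⟩ := ‹Nonempty M›
  let 𝒮 : Set (Set M) := {L | IsClosed L ∧ IsLeftIdeal L}
  have hrange : ∀ x, range (· * x) ∈ 𝒮 := fun x ↦
    ⟨(isCompact_range (hc x)).isClosed, isLeftIdeal_range_mul_right x⟩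
  have hchain : ∀ c ⊆ 𝒮, IsChain (· ⊆ ·) c → c.Nonempty → ∃ lb ∈ 𝒮, ∀ s ∈ c, lb ⊆ s := by
    intro c hcS hc hne
    have : Nonempty c := hne.to_subtype
    refine ⟨⋂₀ c, ⟨isClosed_sInter fun L hL ↦ (hcS hL).1, ?_, ?_⟩, fun _ ↦ sInter_subset_of_mem⟩
    · exact IsCompact.nonempty_sInter_of_directed_nonempty_isCompact_isClosed
        (IsChain.directedOn hc.symm)
        (fun L hL ↦ (hcS hL).2.1) (fun L hL ↦ (hcS hL).1.isCompact) (fun L hL ↦ (hcS hL).1)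
    · exact fun p q hq ↦ mem_sInter.2 fun L hL ↦ (hcS hL).2.2 p q (hq L hL)
  obtain ⟨I, -, hI⟩ := zorn_superset_nonempty 𝒮 hchain univ ⟨isClosed_univ, isLeftIdeal_univ x⟩
  refine ⟨I, hI.prop.2, fun J hJ hJI ↦ ?_⟩
  obtain ⟨y, hy⟩ := hJ.1
  have hyJ : range (· * y) ⊆ J := by rintro _ ⟨s, rfl⟩; exact hJ.2 s y hy
  exact (hI.2 (hrange y) (hyJ.trans hJI)).trans hyJ

lemma Minimal.exists_isIdempotentElem (hc : ∀ r : M, Continuous (· * r)) {I : Set M}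
    (hI : Minimal IsLeftIdeal I) : ∃ u ∈ I, IsIdempotentElem u := by
  obtain ⟨x, hx⟩ := hI.prop.1
  refine exists_idempotent_in_compact_subsemigroup hc I ⟨x, hx⟩ ?_ fun a _ b hb ↦ hI.prop.2 a b hb
  exact hI.range_mul_right_eq hx ▸ isCompact_range (hc x)

end LeftIdeal

section Descent

variable {S S' : Type*} [Semigroup S] [Semigroup S']

theorem Minimal.isGroupIn_of_descent (φ : S →ₙ* S') (ρ : S' → S)
    (hρ : ∀ p s, ρ (φ p * s) = p * ρ s) {M₀ : Set S'} (hM₀ : IsLeftIdeal M₀)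
    (hG : IsGroupIn M₀) {I : Set S} (hI : Minimal IsLeftIdeal I) {u : S} (hu : u ∈ I)
    (huu : IsIdempotentElem u) : IsGroupIn I := by
  have hL : IsLeftIdeal (ρ '' M₀) := by
    obtain ⟨m, hm⟩ := hM₀.1
    refine ⟨⟨ρ m, m, hm, rfl⟩, ?_⟩
    rintro p _ ⟨m, hm, rfl⟩
    exact ⟨φ p * m, hM₀.2 _ m hm, hρ p m⟩
  have hfix : ∀ e : S, IsIdempotentElem e → ∀ y ∈ ρ '' M₀, e * y = y := by
    rintro e he _ ⟨m, hm, rfl⟩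
    rw [← hρ, hG.idempotent_mul_eq hM₀ (he.map φ) hm]
  exact hI.isGroupIn_of_idempotent_unique hu huu fun v hv hvv ↦
    hI.idempotent_unique hL hfix hv hvv hu huu

end Descent

open Pointwise

lemma inter_eq_sdiff_union_sdiff {α : Type*} {T A B : Set α} (hA : A ⊆ T) :
    A ∩ B = T \ ((T \ A) ∪ (T \ B)) := by
  rw [← sdiff_inter, sdiff_sdiff_cancel_left (inter_subset_left.trans hA)]

lemma isClosed_setOf_coords {ι : Type*} (i j k : ι) (P : Bool → Bool → Bool → Prop) :
    IsClosed {f : ι → Bool | P (f i) (f j) (f k)} :=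
  (isClosed_discrete {b : Bool × Bool × Bool | P b.1 b.2.1 b.2.2}).preimage
    (f := fun f : ι → Bool ↦ (f i, f j, f k)) (by fun_prop)

section Algebra

variable {T : Set H} {𝒜 p q : Set (Set H)} {A B : Set H}

lemma mem_dmap {g : H} : g ∈ dmap T p A ↔ g ∈ T ∧ g⁻¹ • A ∈ p := Iff.rfl

lemma IsAlgOn.inter_mem (h𝒜 : IsAlgOn T 𝒜) (hA : A ∈ 𝒜) (hB : B ∈ 𝒜) : A ∩ B ∈ 𝒜 := by
  obtain ⟨hsub, -, -, hdiff, hunion, -⟩ := h𝒜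
  rw [inter_eq_sdiff_union_sdiff (hsub A hA)]
  exact hdiff _ (hunion _ (hdiff A hA) _ (hdiff B hB))

lemma IsUltraOn.mem_of_subset (hp : IsUltraOn T 𝒜 p) (hA : A ∈ p) (hB : B ∈ 𝒜) (hAB : A ⊆ B) :
    B ∈ p :=
  hp.2.2.2.2.1 A hA B hB hAB

lemma IsUltraOn.sdiff_mem_iff (hp : IsUltraOn T 𝒜 p) (hA : A ∈ 𝒜) : T \ A ∈ p ↔ A ∉ p := by
  refine ⟨fun hc ha ↦ hp.2.1 ?_, (hp.2.2.2.2.2 A hA).resolve_left⟩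
  simpa using hp.2.2.2.1 A ha _ hc

lemma IsUltraOn.inter_mem_iff (hp : IsUltraOn T 𝒜 p) (hA : A ∈ 𝒜) (hB : B ∈ 𝒜) :
    A ∩ B ∈ p ↔ A ∈ p ∧ B ∈ p :=
  ⟨fun h ↦ ⟨hp.mem_of_subset h hA inter_subset_left, hp.mem_of_subset h hB inter_subset_right⟩,
    fun h ↦ hp.2.2.2.1 A h.1 B h.2⟩

lemma IsUltraOn.eq_of_subset (hp : IsUltraOn T 𝒜 p) (hq : IsUltraOn T 𝒜 q) (h : p ⊆ q) :
    p = q := by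
  refine h.antisymm fun A hAq ↦ by_contra fun hAp ↦ ?_
  exact (hq.sdiff_mem_iff (hq.1 hAq)).1 (h ((hp.sdiff_mem_iff (hq.1 hAq)).2 hAp)) hAq

lemma IsAlgOn.isUltraOn_principal (h𝒜 : IsAlgOn T 𝒜) {g : H} (hg : g ∈ T) :
    IsUltraOn T 𝒜 {A | A ∈ 𝒜 ∧ g ∈ A} := by
  refine ⟨fun A hA ↦ hA.1, fun h ↦ h.2, ⟨h𝒜.2.2.1, hg⟩,
    fun A hA B hB ↦ ⟨h𝒜.inter_mem hA.1 hB.1, hA.2, hB.2⟩,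
    fun A hA B hB hAB ↦ ⟨hB, hAB hA.2⟩, fun A hA ↦ ?_⟩
  by_cases hgA : g ∈ A
  · exact .inl ⟨hA, hgA⟩
  · exact .inr ⟨h𝒜.2.2.2.1 A hA, hg, hgA⟩

lemma isClosed_setOf_isUltraOn (T : Set H) (𝒜 : Set (Set H)) :
    IsClosed {f : Set H → Bool | IsUltraOn T 𝒜 {A | f A = true}} := by
  simp only [IsUltraOn, subset_def, mem_ofPred_eq, ofPred_and, ofPred_forall, imp_forall_iff]
  refine
    .inter (isClosed_iInter fun A ↦ isClosed_setOf_coords A A A fun a _ _ ↦ a = true → A ∈ 𝒜) <|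
    .inter (isClosed_setOf_coords ∅ ∅ ∅ fun a _ _ ↦ ¬a = true) <|
    .inter (isClosed_setOf_coords T T T fun a _ _ ↦ a = true) <|
    .inter (isClosed_iInter fun A ↦ isClosed_iInter fun B ↦
      isClosed_setOf_coords A B (A ∩ B) fun a b c ↦ a = true → b = true → c = true) <|
    .inter (isClosed_iInter fun A ↦ isClosed_iInter fun B ↦
      isClosed_setOf_coords A B B fun a b _ ↦ a = true → B ∈ 𝒜 → A ⊆ B → b = true) <|
    isClosed_iInter fun A ↦ isClosed_iInter fun _ ↦
      isClosed_setOf_coords A (T \ A) A fun a b _ ↦ a = true ∨ b = true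

end Algebra

/-- A d-closed algebra on a subgroup, bundled so that its Stone space can carry instances. -/
structure DClosedAlgebra (H : Type*) [Group H] where
  T : Subgroup H
  𝒜 : Set (Set H)
  isAlgOn : IsAlgOn T 𝒜
  dClosedOn : DClosedOn T 𝒜

namespace DClosedAlgebra

variable (D : DClosedAlgebra H) {p q r : Set (Set H)} {A B : Set H} {g : H}

lemma smul_mem (hg : g ∈ D.T) (hA : A ∈ D.𝒜) : g • A ∈ D.𝒜 :=
  D.isAlgOn.2.2.2.2.2 g hg A hA

lemma mem_ustar : A ∈ ustar D.T D.𝒜 p q ↔ A ∈ D.𝒜 ∧ dmap D.T q A ∈ p := Iff.rfl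

lemma dmap_empty (hp : IsUltraOn D.T D.𝒜 p) : dmap D.T p ∅ = ∅ := by
  ext g
  simpa [mem_dmap] using fun _ ↦ hp.2.1

lemma dmap_self (hp : IsUltraOn D.T D.𝒜 p) : dmap D.T p D.T = D.T := by
  ext g
  simp only [mem_dmap, SetLike.mem_coe, and_iff_left_iff_imp]
  intro hg
  rw [smul_coe_set (inv_mem hg)]
  exact hp.2.2.1

lemma dmap_inter (hp : IsUltraOn D.T D.𝒜 p) (hA : A ∈ D.𝒜) (hB : B ∈ D.𝒜) :
    dmap D.T p (A ∩ B) = dmap D.T p A ∩ dmap D.T p B := by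
  ext g
  simp only [mem_dmap, mem_inter_iff, smul_set_inter]
  refine ⟨fun ⟨hg, h⟩ ↦ ?_, fun ⟨⟨hg, hA'⟩, _, hB'⟩ ↦ ⟨hg, hp.2.2.2.1 _ hA' _ hB'⟩⟩
  have := (hp.inter_mem_iff (D.smul_mem (inv_mem hg) hA) (D.smul_mem (inv_mem hg) hB)).1 h
  exact ⟨⟨hg, this.1⟩, hg, this.2⟩

lemma dmap_mono (hp : IsUltraOn D.T D.𝒜 p) (hB : B ∈ D.𝒜) (hAB : A ⊆ B) :
    dmap D.T p A ⊆ dmap D.T p B := fun g ⟨hg, h⟩ ↦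
  ⟨hg, hp.mem_of_subset h (D.smul_mem (inv_mem hg) hB) (smul_set_mono (a := g⁻¹) hAB)⟩

lemma dmap_diff (hp : IsUltraOn D.T D.𝒜 p) (hA : A ∈ D.𝒜) :
    dmap D.T p ((D.T : Set H) \ A) = (D.T : Set H) \ dmap D.T p A := by
  ext g
  simp only [mem_dmap, mem_sdiff, SetLike.mem_coe, smul_set_sdiff]
  refine and_congr_right fun hg ↦ ?_
  rw [smul_coe_set (inv_mem hg), hp.sdiff_mem_iff (D.smul_mem (inv_mem hg) hA)]
  exact not_congr (and_iff_right hg).symm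

lemma dmap_smul (hg : g ∈ D.T) : dmap D.T p (g • A) = g • dmap D.T p A := by
  ext h
  simp only [mem_dmap, mem_smul_set_iff_inv_smul_mem, smul_smul, smul_eq_mul, mul_inv_rev,
    inv_inv]
  exact and_congr_left' (mul_mem_cancel_left (inv_mem hg)).symm

lemma isUltraOn_ustar (hp : IsUltraOn D.T D.𝒜 p) (hq : IsUltraOn D.T D.𝒜 q) :
    IsUltraOn D.T D.𝒜 (ustar D.T D.𝒜 p q) := by
  refine ⟨fun A hA ↦ hA.1, fun h ↦ hp.2.1 (D.dmap_empty hq ▸ h.2),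
    ⟨D.isAlgOn.2.2.1, (D.dmap_self hq).symm ▸ hp.2.2.1⟩, ?_, ?_, ?_⟩
  · rintro A ⟨hA, hA'⟩ B ⟨hB, hB'⟩
    exact ⟨D.isAlgOn.inter_mem hA hB, D.dmap_inter hq hA hB ▸ hp.2.2.2.1 _ hA' _ hB'⟩
  · rintro A ⟨-, hA'⟩ B hB hAB
    exact ⟨hB, hp.mem_of_subset hA' (D.dClosedOn q hq B hB) (D.dmap_mono hq hB hAB)⟩
  · intro A hA
    refine (hp.2.2.2.2.2 _ (D.dClosedOn q hq A hA)).imp (fun h ↦ ⟨hA, h⟩) fun h ↦ ?_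
    exact ⟨D.isAlgOn.2.2.2.1 A hA, (D.dmap_diff hq hA).symm ▸ h⟩

lemma dmap_ustar (hA : A ∈ D.𝒜) :
    dmap D.T (ustar D.T D.𝒜 q r) A = dmap D.T q (dmap D.T r A) := by
  ext g
  simp only [mem_dmap, mem_ustar]
  refine and_congr_right fun hg ↦ ?_
  rw [D.dmap_smul (inv_mem hg), and_iff_right (D.smul_mem (inv_mem hg) hA)]

lemma ustar_assoc (hr : IsUltraOn D.T D.𝒜 r) :
    ustar D.T D.𝒜 (ustar D.T D.𝒜 p q) r = ustar D.T D.𝒜 p (ustar D.T D.𝒜 q r) := by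
  ext A
  simp only [mem_ustar]
  refine and_congr_right fun hA ↦ ?_
  rw [D.dmap_ustar hA, and_iff_right (D.dClosedOn r hr A hA)]

/-- The Stone space $S(𝒜)$. -/
abbrev Stone : Type _ := {p : Set (Set H) // IsUltraOn D.T D.𝒜 p}

instance : Semigroup D.Stone where
  mul p q := ⟨ustar D.T D.𝒜 p.1 q.1, D.isUltraOn_ustar p.2 q.2⟩
  mul_assoc _ _ r := Subtype.ext (D.ustar_assoc r.2)

lemma val_mul (p q : D.Stone) : (p * q).1 = ustar D.T D.𝒜 p.1 q.1 := rfl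

instance : Nonempty D.Stone := ⟨⟨_, D.isAlgOn.isUltraOn_principal D.T.one_mem⟩⟩

/-- Induced from `Set H → Bool`, in which the ultrafilters form a closed set
(`isClosed_setOf_isUltraOn`); compactness then comes from Tychonoff's theorem. -/
noncomputable instance : TopologicalSpace D.Stone :=
  .induced (fun p ↦ p.1.boolIndicator) inferInstance

lemma continuous_boolIndicator_apply (A : Set H) :
    Continuous fun p : D.Stone ↦ p.1.boolIndicator A :=
  (continuous_apply A).comp
    (continuous_induced_dom : Continuous fun p : D.Stone ↦ p.1.boolIndicator)

lemma isEmbedding_boolIndicator : Topology.IsEmbedding fun p : D.Stone ↦ p.1.boolIndicator := by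
  refine ⟨⟨rfl⟩, fun _ _ h ↦ Subtype.ext (ext fun A ↦ ?_)⟩
  rw [mem_iff_boolIndicator, mem_iff_boolIndicator]
  exact congrFun h A ▸ Iff.rfl

lemma range_boolIndicator :
    range (fun p : D.Stone ↦ p.1.boolIndicator) = {f | IsUltraOn D.T D.𝒜 {A | f A = true}} := by
  refine (range_subset_iff.2 fun p ↦ ?_).antisymm fun f hf ↦ ⟨⟨_, hf⟩, funext fun A ↦ ?_⟩
  · simpa only [mem_ofPred_eq, ← mem_iff_boolIndicator, ofPred_mem_eq] using p.2
  · cases h : f A <;> simp [boolIndicator, h]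

instance : T2Space D.Stone := D.isEmbedding_boolIndicator.t2Space

instance : CompactSpace D.Stone :=
  Topology.IsClosedEmbedding.compactSpace (f := fun p : D.Stone ↦ p.1.boolIndicator)
    ⟨D.isEmbedding_boolIndicator, D.range_boolIndicator ▸ isClosed_setOf_isUltraOn _ _⟩

lemma continuous_mul_right (r : D.Stone) : Continuous (· * r) := by
  refine continuous_induced_rng.2 (continuous_pi fun A ↦ ?_)
  by_cases hA : A ∈ D.𝒜
  · convert D.continuous_boolIndicator_apply (dmap D.T r.1 A) using 2 with p
    simp [boolIndicator, val_mul, mem_ustar, hA]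
  · convert (continuous_const : Continuous fun _ : D.Stone ↦ false) using 2 with p
    simp [boolIndicator, val_mul, mem_ustar, hA]

variable (L : Set D.Stone)

lemma isLeftIdealU_image_iff :
    IsLeftIdealU D.T D.𝒜 (Subtype.val '' L) ↔ IsLeftIdeal L := by
  simp only [IsLeftIdealU, IsLeftIdeal, image_nonempty, forall_mem_image]
  refine ⟨fun ⟨hne, _, h⟩ ↦ ⟨hne, fun p q hq ↦ ?_⟩, fun ⟨hne, h⟩ ↦ ⟨hne, fun q _ ↦ q.2, ?_⟩⟩
  · exact Subtype.val_injective.mem_set_image.1 (h p.1 p.2 hq)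
  · intro p hp q hq
    exact Subtype.val_injective.mem_set_image.2 (h ⟨p, hp⟩ q hq)

lemma isMinLeftIdealU_image_iff :
    IsMinLeftIdealU D.T D.𝒜 (Subtype.val '' L) ↔ Minimal IsLeftIdeal L := by
  rw [IsMinLeftIdealU, isLeftIdealU_image_iff, Minimal]
  refine and_congr_right fun _ ↦ ⟨fun h J hJ hJL ↦ ?_, fun h J hJL hJ ↦ ?_⟩
  · exact (Subtype.val_injective.image_injective
      (h _ (image_mono hJL) ((D.isLeftIdealU_image_iff J).2 hJ))).ge
  · lift J to Set D.Stone using hJ.2.1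
    rw [image_subset_image_iff Subtype.val_injective] at hJL
    rw [hJL.antisymm (h ((D.isLeftIdealU_image_iff J).1 hJ) hJL)]

lemma isGroupU_image_iff : IsGroupU D.T D.𝒜 (Subtype.val '' L) ↔ IsGroupIn L := by
  simp only [IsGroupU, IsGroupIn, forall_mem_image, exists_mem_image, ← val_mul,
    Subtype.val_injective.mem_set_image, Subtype.val_inj]

end DClosedAlgebra

namespace CombSetup

variable (C : CombSetup H) {p q s : Set (Set H)} {A B : Set H}

def dAlg𝒜 : DClosedAlgebra H := ⟨C.G, C.𝒜, C.alg𝒜, C.dclosed𝒜⟩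

/-- `((⊤ : Subgroup H) : Set H)` is `univ` only up to unfolding, hence the `change`s below. -/
def dAlgℬ : DClosedAlgebra H := ⟨⊤, C.ℬ, C.algℬ, C.dclosedℬ⟩

lemma sharp_self : C.sharp C.G = univ := by
  simpa [C.sharp_empty] using C.sharp_compl ∅ C.alg𝒜.2.1

lemma sharp_mono (hA : A ∈ C.𝒜) (hB : B ∈ C.𝒜) (hAB : A ⊆ B) : C.sharp A ⊆ C.sharp B := by
  rw [← union_eq_self_of_subset_left hAB, C.sharp_union A hA B hB]
  exact subset_union_left

lemma sharp_inter_distrib (hA : A ∈ C.𝒜) (hB : B ∈ C.𝒜) :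
    C.sharp (A ∩ B) = C.sharp A ∩ C.sharp B := by
  have hA' := C.alg𝒜.2.2.2.1 A hA
  have hB' := C.alg𝒜.2.2.2.1 B hB
  rw [inter_eq_sdiff_union_sdiff (C.alg𝒜.1 A hA), C.sharp_compl _ (C.alg𝒜.2.2.2.2.1 _ hA' _ hB'),
    C.sharp_union _ hA' _ hB', C.sharp_compl A hA, C.sharp_compl B hB, compl_union, compl_compl,
    compl_compl]

lemma sharp_smul {g : H} (hg : g ∈ C.G) (hA : A ∈ C.𝒜) : C.sharp (g • A) = g • C.sharp A :=
  C.sharp_trans g hg A hA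

lemma isUltraOn_res (hs : IsUltraOn univ C.ℬ s) : IsUltraOn C.G C.𝒜 (C.res s) := by
  refine ⟨fun A hA ↦ hA.1, fun h ↦ hs.2.1 (C.sharp_empty ▸ h.2),
    ⟨C.alg𝒜.2.2.1, C.sharp_self ▸ hs.2.2.1⟩, ?_, ?_, ?_⟩
  · rintro A ⟨hA, hA'⟩ B ⟨hB, hB'⟩
    exact ⟨C.alg𝒜.inter_mem hA hB, C.sharp_inter_distrib hA hB ▸ hs.2.2.2.1 _ hA' _ hB'⟩
  · rintro A ⟨hA, hA'⟩ B hB hAB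
    exact ⟨hB, hs.mem_of_subset hA' (C.sharp_mem B hB) (C.sharp_mono hA hB hAB)⟩
  · intro A hA
    refine (hs.2.2.2.2.2 _ (C.sharp_mem A hA)).imp (fun h ↦ ⟨hA, h⟩) fun h ↦ ?_
    refine ⟨C.alg𝒜.2.2.2.1 A hA, ?_⟩
    rwa [C.sharp_compl A hA, compl_eq_univ_sdiff]

lemma isUltraOn_coheirExt (hp : IsUltraOn C.G C.𝒜 p) : IsUltraOn univ C.ℬ (C.coheirExt p) := by
  refine ⟨fun B hB ↦ hB.1, fun h ↦ hp.2.1 (empty_inter (C.G : Set H) ▸ h.2),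
    ⟨C.algℬ.2.2.1, (univ_inter (C.G : Set H)).symm ▸ hp.2.2.1⟩, ?_, ?_, ?_⟩
  · rintro A ⟨hA, hA'⟩ B ⟨hB, hB'⟩
    refine ⟨C.algℬ.inter_mem hA hB, ?_⟩
    rw [inter_inter_distrib_right]
    exact hp.2.2.2.1 _ hA' _ hB'
  · rintro A ⟨hA, hA'⟩ B hB hAB
    exact ⟨hB, hp.mem_of_subset hA' (C.restrict_mem B hB) (inter_subset_inter_left _ hAB)⟩
  · intro B hB
    refine (hp.2.2.2.2.2 _ (C.restrict_mem B hB)).imp (fun h ↦ ⟨hB, h⟩) fun h ↦ ?_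
    refine ⟨C.algℬ.2.2.2.1 B hB, ?_⟩
    convert h using 1
    ext x
    simp only [mem_inter_iff, mem_sdiff, mem_univ, true_and]
    tauto

lemma dmap_sharp_inter (hA : A ∈ C.𝒜) :
    dmap univ s (C.sharp A) ∩ C.G = dmap C.G (C.res s) A := by
  ext g
  simp only [mem_inter_iff, mem_dmap, mem_univ, true_and, CombSetup.res, mem_ofPred_eq]
  rw [and_comm]
  refine and_congr_right fun hg ↦ ?_
  rw [C.sharp_smul (inv_mem hg) hA]
  exact (and_iff_right (C.dAlg𝒜.smul_mem (inv_mem hg) hA)).symm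

lemma res_ustar_coheirExt (hp : IsUltraOn C.G C.𝒜 p) (hs : IsUltraOn univ C.ℬ s) :
    C.res (ustar univ C.ℬ (C.coheirExt p) s) = ustar C.G C.𝒜 p (C.res s) := by
  refine ((C.dAlg𝒜.isUltraOn_ustar hp (C.isUltraOn_res hs)).eq_of_subset
    (C.isUltraOn_res (C.dAlgℬ.isUltraOn_ustar (C.isUltraOn_coheirExt hp) hs)) ?_).symm
  rintro A ⟨hA, hd⟩
  refine ⟨hA, C.sharp_mem A hA, C.dclosedℬ s hs _ (C.sharp_mem A hA), ?_⟩
  change dmap univ s (C.sharp A) ∩ C.G ∈ p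
  rwa [C.dmap_sharp_inter hA]

lemma dmap_coheirExt_inter (hB : B ∈ C.ℬ) :
    dmap univ (C.coheirExt q) B ∩ C.G = dmap C.G q (B ∩ C.G) := by
  ext g
  simp only [mem_inter_iff, mem_dmap, mem_univ, true_and, CombSetup.coheirExt, mem_ofPred_eq]
  rw [and_comm]
  refine and_congr_right fun hg ↦ ?_
  rw [smul_set_inter, smul_coe_set (inv_mem hg)]
  exact and_iff_right (C.dAlgℬ.smul_mem (Subgroup.mem_top _) hB)

lemma coheirExt_ustar (hp : IsUltraOn C.G C.𝒜 p) (hq : IsUltraOn C.G C.𝒜 q) :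
    ustar univ C.ℬ (C.coheirExt p) (C.coheirExt q) = C.coheirExt (ustar C.G C.𝒜 p q) := by
  refine ((C.isUltraOn_coheirExt (C.dAlg𝒜.isUltraOn_ustar hp hq)).eq_of_subset
    (C.dAlgℬ.isUltraOn_ustar (C.isUltraOn_coheirExt hp) (C.isUltraOn_coheirExt hq)) ?_).symm
  rintro B ⟨hB, -, hBd⟩
  refine ⟨hB, C.dclosedℬ _ (C.isUltraOn_coheirExt hq) B hB, ?_⟩
  change dmap univ (C.coheirExt q) B ∩ C.G ∈ p
  rwa [C.dmap_coheirExt_inter hB]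

def resStone (s : C.dAlgℬ.Stone) : C.dAlg𝒜.Stone := ⟨C.res s.1, C.isUltraOn_res s.2⟩

def coheirExtHom : C.dAlg𝒜.Stone →ₙ* C.dAlgℬ.Stone where
  toFun p := ⟨C.coheirExt p.1, C.isUltraOn_coheirExt p.2⟩
  map_mul' p q := Subtype.ext (C.coheirExt_ustar p.2 q.2).symm

lemma resStone_coheirExtHom_mul (p : C.dAlg𝒜.Stone) (s : C.dAlgℬ.Stone) :
    C.resStone (C.coheirExtHom p * s) = p * C.resStone s :=
  Subtype.ext (C.res_ustar_coheirExt p.2 s.2)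

end CombSetup

/-- If every minimal left ideal of $S(ℬ)$ is a group, then every minimal left ideal
of $S(𝒜)$ is a group. -/
theorem minLeftIdeal_group_descends (C : CombSetup H)
    (hB : ∀ I : Set (Set (Set H)), IsMinLeftIdealU (univ : Set H) C.ℬ I →
      IsGroupU (univ : Set H) C.ℬ I)
    (I : Set (Set (Set H))) (hI : IsMinLeftIdealU (C.G : Set H) C.𝒜 I) :
    IsGroupU (C.G : Set H) C.𝒜 I := by
  lift I to Set C.dAlg𝒜.Stone using hI.1.2.1
  replace hI : Minimal IsLeftIdeal I := (C.dAlg𝒜.isMinLeftIdealU_image_iff I).1 hI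
  obtain ⟨M₀, hM₀⟩ := exists_minimal_isLeftIdeal C.dAlgℬ.continuous_mul_right
  have hM₀G : IsGroupIn M₀ := (C.dAlgℬ.isGroupU_image_iff M₀).1
    (hB _ ((C.dAlgℬ.isMinLeftIdealU_image_iff M₀).2 hM₀))
  obtain ⟨u, hu, huu⟩ := hI.exists_isIdempotentElem C.dAlg𝒜.continuous_mul_right
  exact (C.dAlg𝒜.isGroupU_image_iff I).2 (hI.isGroupIn_of_descent C.coheirExtHom C.resStone
    C.resStone_coheirExtHom_mul hM₀.prop hM₀G hu huu)
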